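/- arXiv:2510.24921 — 8 statements merged into one kernel-verified Lean document; each statement's English description precedes it below -/
import Mathlib

section
/- Fix i ∈ {1,…,m} and let Δ_i := σ_i⁻¹∘Δ. If b, e ∈ ℂ[h] satisfy b·Δ_i⁻¹(e) = h_i and e·Δ_i(b) = h_i, then there exists a ∈ ℂˣ such that either b = a·h_i and e = a⁻¹, or b = a and e = a⁻¹·h_i. -/
/-!
`b` divides `h_i`, so up to a nonzero constant it is `1` or `h_i`, and `Δ_i⁻¹(e)` is the
complementary factor. Since `Δ_i = σ_i⁻¹ ∘ Δ` fixes `h_i` and the constants, `e` is that same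
factor.
-/

open MvPolynomial

/-- The shift automorphism of `ℂ[h₁,…]` sending `h_i ↦ h_i + c i`. -/
noncomputable def shiftAut {ι : Type*} (c : ι → ℂ) :
    MvPolynomial ι ℂ ≃ₐ[ℂ] MvPolynomial ι ℂ :=
  AlgEquiv.ofAlgHom
    (aeval fun i => X i + C (c i))
    (aeval fun i => X i - C (c i))
    (by ext i : 1; simp)
    (by ext i : 1; simp)

/-- The automorphism `σ_i` of `ℂ[h₁,…,h_m]` with `σ_i(h_i) = h_i - 1`, `σ_i(h_j) = h_j` (j ≠ i). -/
noncomputable def sig (m : ℕ) (i : Fin m) :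
    MvPolynomial (Fin m) ℂ ≃ₐ[ℂ] MvPolynomial (Fin m) ℂ :=
  shiftAut (fun j => if j = i then (-1 : ℂ) else 0)

/-- The automorphism `Δ = σ₁∘⋯∘σ_m`, i.e. `Δ(h_i) = h_i - 1` for all `i`. -/
noncomputable def Del (m : ℕ) :
    MvPolynomial (Fin m) ℂ ≃ₐ[ℂ] MvPolynomial (Fin m) ℂ :=
  shiftAut (fun _ : Fin m => (-1 : ℂ))

/-- The automorphism `Δ_i = σ_i⁻¹ ∘ Δ`. -/
noncomputable def Deli (m : ℕ) (i : Fin m) :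
    MvPolynomial (Fin m) ℂ ≃ₐ[ℂ] MvPolynomial (Fin m) ℂ :=
  (Del m).trans (sig m i).symm

namespace MvPolynomial

variable {R σ : Type*} [CommRing R] [IsDomain R]

theorem exists_unit_of_mul_algEquiv_eq_X (φ : MvPolynomial σ R ≃ₐ[R] MvPolynomial σ R) {i : σ}
    (hφ : φ (X i) = X i) {b e : MvPolynomial σ R} (h : b * φ e = X i) :
    ∃ a : Rˣ,
      (b = C (a : R) * X i ∧ e = C ((a⁻¹ : Rˣ) : R)) ∨
      (b = C (a : R) ∧ e = C ((a⁻¹ : Rˣ) : R) * X i) := by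
  have hφC (r : R) : φ (C r) = C r := by
    rw [← algebraMap_eq, AlgEquiv.commutes]
  obtain ⟨r, hr, hb | hb⟩ := dvd_X_iff_exists.mp ⟨_, h.symm⟩
  · refine ⟨hr.unit, Or.inr ⟨hb, φ.injective ?_⟩⟩
    rw [map_mul, hφC, hφ, ← h, hb, ← mul_assoc, ← C_mul]
    simp
  · refine ⟨hr.unit, Or.inl ⟨by rw [hb, smul_eq_C_mul]; rfl, φ.injective ?_⟩⟩
    have hCe : C r * φ e = 1 := by
      refine mul_left_cancel₀ (X_ne_zero i) ?_
      calc X i * (C r * φ e) = (C r * X i) * φ e := by ring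
        _ = X i * 1 := by rw [← smul_eq_C_mul, ← hb, h, mul_one]
    calc φ e = C ((hr.unit⁻¹ : Rˣ) : R) * (C r * φ e) := by
          rw [← mul_assoc, ← C_mul]; simp
      _ = φ (C ((hr.unit⁻¹ : Rˣ) : R)) := by rw [hCe, mul_one, hφC]

end MvPolynomial

lemma deli_X (m : ℕ) (i : Fin m) : Deli m i (X i) = X i := by
  simp [Deli, Del, sig, shiftAut, AlgEquiv.ofAlgHom]

theorem stmt_9_general (m : ℕ) (i : Fin m)
    (b e : MvPolynomial (Fin m) ℂ)
    (h1 : b * (Deli m i).symm e = X i) :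
    ∃ a : ℂˣ,
      (b = C (a : ℂ) * X i ∧ e = C ((a⁻¹ : ℂˣ) : ℂ)) ∨
      (b = C (a : ℂ) ∧ e = C ((a⁻¹ : ℂˣ) : ℂ) * X i) :=
  exists_unit_of_mul_algEquiv_eq_X (Deli m i).symm
    ((AlgEquiv.symm_apply_eq _).mpr (deli_X m i).symm) h1

/-- If `b·Δ_i⁻¹(e) = h_i` and `e·Δ_i(b) = h_i` in `ℂ[h₁,…,h_m]`, then there is `a ∈ ℂˣ` with
`(b, e) = (a·h_i, a⁻¹)` or `(b, e) = (a, a⁻¹·h_i)`. -/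
theorem stmt_9 (m : ℕ) (hm : 1 ≤ m) (i : Fin m)
    (b e : MvPolynomial (Fin m) ℂ)
    (h1 : b * (Deli m i).symm e = X i)
    (h2 : e * Deli m i b = X i) :
    ∃ a : ℂˣ,
      (b = C (a : ℂ) * X i ∧ e = C ((a⁻¹ : ℂˣ) : ℂ)) ∨
      (b = C (a : ℂ) ∧ e = C ((a⁻¹ : ℂˣ) : ℂ) * X i) :=
  stmt_9_general m i b e h1
end

section
/- Let a, b ∈ (ℂˣ)^m and S₁, S₂ ⊆ {1,…,m}. There exists an invertible matrix W ∈ Mat₂(ℂ[h]) such that W⁻¹·E_i^{(a,S₁)}·Δ_i⁻¹(W) = E_i^{(b,S₂)} and W⁻¹·F_i^{(a,S₁)}·Δ_i(W) = F_i^{(b,S₂)} for all i ∈ {1,…,m} if and only if S₁ = S₂ and there exists γ ∈ ℂˣ with a_i = γ·b_i for all i ∈ {1,…,m}. -/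
open MvPolynomial

/-- Normal-form matrix `E_i^{(a,S)}`. -/
noncomputable def Emat (m : ℕ) (a : Fin m → ℂˣ) (S : Finset (Fin m)) (i : Fin m) :
    Matrix (Fin 2) (Fin 2) (MvPolynomial (Fin m) ℂ) :=
  if i ∈ S then !![0, C ((a i : ℂ)) * X i; 0, 0] else !![0, C ((a i : ℂ)); 0, 0]

/-- Normal-form matrix `F_i^{(a,S)}`. -/
noncomputable def Fmat (m : ℕ) (a : Fin m → ℂˣ) (S : Finset (Fin m)) (i : Fin m) :
    Matrix (Fin 2) (Fin 2) (MvPolynomial (Fin m) ℂ) :=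
  if i ∈ S then !![0, 0; C (((a i)⁻¹ : ℂˣ) : ℂ), 0]
  else !![0, 0; C (((a i)⁻¹ : ℂˣ) : ℂ) * X i, 0]

/-!
Only the fact that the twists `Δ_i^{±1}` are `ℂ`-algebra maps matters. For invertible `W` the
relations read `E_a · W^{Δ_i⁻¹} = W · E_b` and `F_a · W^{Δ_i} = W · F_b`. The `(2,1)` entry of the
first forces `W₂₁ = 0`, so `W₁₁ W₂₂ = det W` is a unit and both diagonal entries are nonzero
constants `c, d`, fixed by every twist. The `(1,2)` entry then compares the monomials
`a_i d · h_i^[i ∈ S₁]` and `c b_i · h_i^[i ∈ S₂]`, giving `S₁ = S₂` and `a = (c/d) b`.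
Conversely `diag(γ, 1)` intertwines the normal forms when `a = γ b`.
-/

namespace Matrix

variable {R : Type*} [CommRing R]

theorem inv_mul_mul_eq_iff_of_isUnit {n : Type*} [Fintype n] [DecidableEq n]
    {W M W' N : Matrix n n R} (hW : IsUnit W) : W⁻¹ * M * W' = N ↔ M * W' = W * N := by
  let := hW.invertible
  rw [Matrix.mul_assoc, inv_mul_eq_iff_eq_mul_of_invertible]

theorem strictUpper_mul_eq_mul_strictUpper_iff (e e' : R) (W W' : Matrix (Fin 2) (Fin 2) R) :
    !![0, e; 0, 0] * W' = W * !![0, e'; 0, 0] ↔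
      e * W' 1 0 = 0 ∧ e * W' 1 1 = W 0 0 * e' ∧ W 1 0 * e' = 0 := by
  simp [← Matrix.ext_iff, Fin.forall_fin_two, Matrix.mul_apply, Matrix.vecMul, dotProduct, eq_comm,
    and_assoc]

theorem strictLower_mul_eq_mul_strictLower_iff (f f' : R) (W W' : Matrix (Fin 2) (Fin 2) R) :
    !![0, 0; f, 0] * W' = W * !![0, 0; f', 0] ↔
      W 0 1 * f' = 0 ∧ f * W' 0 0 = W 1 1 * f' ∧ f * W' 0 1 = 0 := by
  simp [← Matrix.ext_iff, Fin.forall_fin_two, Matrix.mul_apply, Matrix.vecMul, dotProduct, eq_comm]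

end Matrix

namespace MvPolynomial

theorem monomial_single_ite_eq_iff {R σ : Type*} [CommSemiring R] {i : σ} {p q : Prop}
    [Decidable p] [Decidable q] {u v : R} (hu : u ≠ 0) :
    monomial (Finsupp.single i (if p then 1 else 0)) u =
        monomial (Finsupp.single i (if q then 1 else 0)) v ↔ (p ↔ q) ∧ u = v := by
  rw [monomial_eq_monomial_iff, (Finsupp.single_injective i).eq_iff]
  by_cases hp : p <;> by_cases hq : q <;> simp [hp, hq, hu]

theorem map_diag_C_one {R σ F : Type*} [CommRing R]
    [FunLike F (MvPolynomial σ R) (MvPolynomial σ R)]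
    [AlgHomClass F R (MvPolynomial σ R) (MvPolynomial σ R)] (f : F) (c : R) :
    (!![C c, 0; 0, 1] : Matrix (Fin 2) (Fin 2) (MvPolynomial σ R)).map f = !![C c, 0; 0, 1] := by
  have hC : f (C c) = C c := AlgHomClass.commutes f c
  refine Matrix.ext fun j k => ?_
  fin_cases j <;> fin_cases k <;> simp [hC]

theorem isUnit_diag_C_one {R σ : Type*} [CommRing R] {c : R} (hc : IsUnit c) :
    IsUnit (!![C c, 0; 0, 1] : Matrix (Fin 2) (Fin 2) (MvPolynomial σ R)) := by
  simpa [Matrix.isUnit_iff_isUnit_det] using hc.map (C : R →+* MvPolynomial σ R)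

end MvPolynomial

section NormalForm

variable {m : ℕ}

theorem Emat_eq_monomial (a : Fin m → ℂˣ) (S : Finset (Fin m)) (i : Fin m) :
    Emat m a S i = !![0, monomial (Finsupp.single i (if i ∈ S then 1 else 0)) (a i : ℂ); 0, 0] := by
  unfold Emat
  split_ifs <;> simp [C_mul_X_eq_monomial]

theorem Fmat_eq_monomial (a : Fin m → ℂˣ) (S : Finset (Fin m)) (i : Fin m) :
    Fmat m a S i =
      !![0, 0; monomial (Finsupp.single i (if i ∈ S then 0 else 1)) (((a i)⁻¹ : ℂˣ) : ℂ), 0] := by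
  unfold Fmat
  split_ifs <;> simp [C_mul_X_eq_monomial]

theorem eq_of_Emat_mul_eq_mul_Emat {a b : Fin m → ℂˣ} {S₁ S₂ : Finset (Fin m)} (i₀ : Fin m)
    {F : Type*} [FunLike F (MvPolynomial (Fin m) ℂ) (MvPolynomial (Fin m) ℂ)]
    [AlgHomClass F ℂ (MvPolynomial (Fin m) ℂ) (MvPolynomial (Fin m) ℂ)] (φ : Fin m → F)
    {W : Matrix (Fin 2) (Fin 2) (MvPolynomial (Fin m) ℂ)} (hW : IsUnit W)
    (hE : ∀ i, Emat m a S₁ i * W.map (φ i) = W * Emat m b S₂ i) :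
    S₁ = S₂ ∧ ∃ γ : ℂˣ, ∀ i, a i = γ * b i := by
  simp_rw [Emat_eq_monomial, Matrix.strictUpper_mul_eq_mul_strictUpper_iff] at hE
  have hW10 : W 1 0 = 0 := by simpa using (hE i₀).2.2
  have hdiag : IsUnit (W 0 0 * W 1 1) := by
    simpa [Matrix.det_fin_two, hW10] using (Matrix.isUnit_iff_isUnit_det W).mp hW
  obtain ⟨c, hc, hW00⟩ := isUnit_iff_eq_C_of_isReduced.mp (isUnit_of_mul_isUnit_left hdiag)
  obtain ⟨d, hd, hW11⟩ := isUnit_iff_eq_C_of_isReduced.mp (isUnit_of_mul_isUnit_right hdiag)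
  have hcoeff : ∀ i, (i ∈ S₁ ↔ i ∈ S₂) ∧ (a i : ℂ) * d = c * b i := by
    intro i
    have h := (hE i).2.1
    rw [Matrix.map_apply, hW11, hW00, ← algebraMap_eq, AlgHomClass.commutes, algebraMap_eq,
      mul_comm, C_mul_monomial, C_mul_monomial, mul_comm (d : ℂ)] at h
    exact (monomial_single_ite_eq_iff (mul_ne_zero (a i).ne_zero hd.ne_zero)).mp h
  refine ⟨Finset.ext fun i => (hcoeff i).1, Units.mk0 (c / d) (div_ne_zero hc.ne_zero hd.ne_zero),
    fun i => Units.ext ?_⟩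
  rw [Units.val_mul, Units.val_mk0, div_mul_eq_mul_div, eq_div_iff hd.ne_zero, (hcoeff i).2]

theorem Emat_mul_diag_eq {a b : Fin m → ℂˣ} {γ : ℂˣ} (hγ : ∀ i, a i = γ * b i)
    (S : Finset (Fin m)) (i : Fin m) :
    Emat m a S i * !![C (γ : ℂ), 0; 0, 1] = !![C (γ : ℂ), 0; 0, 1] * Emat m b S i := by
  rw [Emat_eq_monomial, Emat_eq_monomial, Matrix.strictUpper_mul_eq_mul_strictUpper_iff]
  simp [C_mul_monomial, hγ i]

theorem Fmat_mul_diag_eq {a b : Fin m → ℂˣ} {γ : ℂˣ} (hγ : ∀ i, a i = γ * b i)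
    (S : Finset (Fin m)) (i : Fin m) :
    Fmat m a S i * !![C (γ : ℂ), 0; 0, 1] = !![C (γ : ℂ), 0; 0, 1] * Fmat m b S i := by
  rw [Fmat_eq_monomial, Fmat_eq_monomial, Matrix.strictLower_mul_eq_mul_strictLower_iff]
  simp [mul_comm, C_mul_monomial, hγ i]

end NormalForm

theorem stmt_12_general (m : ℕ) (a b : Fin m → ℂˣ) (S₁ S₂ : Finset (Fin m)) :
    (∃ W : Matrix (Fin 2) (Fin 2) (MvPolynomial (Fin m) ℂ), IsUnit W ∧
      ∀ i, W⁻¹ * Emat m a S₁ i * W.map ⇑(Deli m i).symm = Emat m b S₂ i ∧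
           W⁻¹ * Fmat m a S₁ i * W.map ⇑(Deli m i) = Fmat m b S₂ i) ↔
    (S₁ = S₂ ∧ ∃ γ : ℂˣ, ∀ i, a i = γ * b i) := by
  constructor
  · rintro ⟨W, hW, hWEF⟩
    rcases isEmpty_or_nonempty (Fin m) with _ | ⟨⟨i₀⟩⟩
    · exact ⟨Subsingleton.elim _ _, 1, isEmptyElim⟩
    · exact eq_of_Emat_mul_eq_mul_Emat i₀ (fun i => (Deli m i).symm) hW fun i =>
        (Matrix.inv_mul_mul_eq_iff_of_isUnit hW).mp (hWEF i).1
  · rintro ⟨rfl, γ, hγ⟩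
    refine ⟨!![C (γ : ℂ), 0; 0, 1], isUnit_diag_C_one γ.isUnit, fun i => ⟨?_, ?_⟩⟩
    · rw [Matrix.inv_mul_mul_eq_iff_of_isUnit (isUnit_diag_C_one γ.isUnit), map_diag_C_one]
      exact Emat_mul_diag_eq hγ S₁ i
    · rw [Matrix.inv_mul_mul_eq_iff_of_isUnit (isUnit_diag_C_one γ.isUnit), map_diag_C_one]
      exact Fmat_mul_diag_eq hγ S₁ i

/-- `M(a, S₁) ≅ M(b, S₂)` iff `S₁ = S₂` and `a = γ·b` for some `γ ∈ ℂˣ`. -/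
theorem stmt_12 (m : ℕ) (hm : 2 ≤ m) (a b : Fin m → ℂˣ) (S₁ S₂ : Finset (Fin m)) :
    (∃ W : Matrix (Fin 2) (Fin 2) (MvPolynomial (Fin m) ℂ), IsUnit W ∧
      ∀ i, W⁻¹ * Emat m a S₁ i * W.map ⇑(Deli m i).symm = Emat m b S₂ i ∧
           W⁻¹ * Fmat m a S₁ i * W.map ⇑(Deli m i) = Fmat m b S₂ i) ↔
    (S₁ = S₂ ∧ ∃ γ : ℂˣ, ∀ i, a i = γ * b i) :=
  stmt_12_general m a b S₁ S₂
end

section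
/- Let a ∈ (ℂˣ)^m and S ⊆ {1,…,m}. If W ∈ Mat₂(ℂ[h]) satisfies W·E_i^{(a,S)} = E_i^{(a,S)}·Δ_i⁻¹(W) and W·F_i^{(a,S)} = F_i^{(a,S)}·Δ_i(W) for all i ∈ {1,…,m}, then there exists a one-variable polynomial F ∈ ℂ[T] such that W = [[F(h₁+⋯+h_m+m−1), 0],[0, F(h₁+⋯+h_m)]], where F(p) denotes the evaluation of F at the element p ∈ ℂ[h]. -/
open MvPolynomial

/-!
The relations with the nilpotent matrices `E_i`, `F_i` force `W` to be diagonal with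
`W₁₁ = Δ_i(W₀₀)` for every `i`. Comparing two values of `i`, the polynomial function of `W₀₀`
is invariant under the translations by `e_i - e_j`. A polynomial that is periodic along a vector
is constant on every line in that direction (along the line it is a one-variable polynomial
with infinitely many equal values), so `W₀₀` is constant on the hyperplanes `∑ hᵢ = const`,
i.e. `W₀₀ = G(h₁+⋯+h_m)`, and then `W₁₁ = Δ_i(W₀₀) = G(h₁+⋯+h_m − m + 1)`.
-/

section Periods

variable {σ K : Type*} [Field K]

lemma MvPolynomial.polynomial_eval_aeval (g : σ → Polynomial K) (t : K) (P : MvPolynomial σ K) :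
    (aeval g P).eval t = eval (fun k => (g k).eval t) P := by
  rw [← Polynomial.coe_aeval_eq_eval, ← AlgHom.comp_apply, comp_aeval, aeval_eq_eval]

variable [CharZero K]

lemma MvPolynomial.eval_add_smul_eq_of_eval_add_eq {P : MvPolynomial σ K} {v : σ → K}
    (hv : ∀ x, eval (x + v) P = eval x P) (x : σ → K) (t : K) :
    eval (x + t • v) P = eval x P := by
  have hnat : ∀ n : ℕ, eval (x + (n : K) • v) P = eval x P := by
    intro n
    induction n with
    | zero => simp
    | succ n ih => rw [Nat.cast_succ, add_smul, one_smul, ← add_assoc, hv, ih]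
  -- `t ↦ P(x + t • v)` is a one-variable polynomial taking the value `P(x)` at every `t ∈ ℕ`.
  set q : Polynomial K := aeval (fun k => Polynomial.C (x k) + Polynomial.C (v k) * Polynomial.X) P
  have hq : ∀ s, q.eval s = eval (x + s • v) P := by
    intro s
    rw [MvPolynomial.polynomial_eval_aeval]
    refine congrArg (eval · P) (_root_.funext fun k => ?_)
    simp only [Polynomial.eval_add, Polynomial.eval_mul, Polynomial.eval_C, Polynomial.eval_X,
      Pi.add_apply, Pi.smul_apply, smul_eq_mul, mul_comm]
  have hconst : q = Polynomial.C (eval x P) := by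
    refine Polynomial.eq_of_infinite_eval_eq _ _ <|
      (Set.infinite_range_of_injective Nat.cast_injective).mono ?_
    rintro _ ⟨n, rfl⟩
    simp [hq, hnat]
  rw [← hq, hconst, Polynomial.eval_C]

def MvPolynomial.periods (P : MvPolynomial σ K) : Submodule K (σ → K) where
  carrier := {v | ∀ x, eval (x + v) P = eval x P}
  add_mem' {v w} hv hw x := by rw [← add_assoc, hw, hv]
  zero_mem' := by simp
  smul_mem' t v hv x := eval_add_smul_eq_of_eval_add_eq hv x t

lemma MvPolynomial.exists_eq_aeval_sum_X [Fintype σ] [DecidableEq σ] [Nonempty σ]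
    (P : MvPolynomial σ K) (hP : ∀ i j, Pi.single i 1 - Pi.single j 1 ∈ P.periods) :
    ∃ G : Polynomial K, P = Polynomial.aeval (∑ i, X i) G := by
  obtain ⟨i₀⟩ := ‹Nonempty σ›
  refine ⟨aeval (Pi.single i₀ Polynomial.X) P, MvPolynomial.funext fun x => ?_⟩
  have hcollapse :
      Pi.single i₀ (∑ i, x i) - x = ∑ i, x i • (Pi.single i₀ 1 - Pi.single i 1) := by
    ext k
    by_cases hk : k = i₀ <;> simp [hk, Pi.single_apply, Finset.sum_sub_distrib, mul_sub]
  have hmem : Pi.single i₀ (∑ i, x i) - x ∈ P.periods := by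
    rw [hcollapse]
    exact Submodule.sum_mem _ fun i _ => Submodule.smul_mem _ _ (hP i₀ i)
  change aeval x P = aeval x (Polynomial.aeval _ _)
  rw [← Polynomial.aeval_algHom_apply, Polynomial.coe_aeval_eq_eval, polynomial_eval_aeval,
    aeval_eq_eval, ← hmem x, add_sub_cancel]
  refine congrArg (eval · P) (_root_.funext fun k => ?_)
  by_cases hk : k = i₀ <;> simp [hk]

end Periods

section TwoByTwo

variable {R : Type*} [CommRing R] [NoZeroDivisors R] {W W' : Matrix (Fin 2) (Fin 2) R}

lemma Matrix.apply_one_zero_eq_zero_of_mul_upper_eq {b : R} (hb : b ≠ 0)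
    (h : W * !![0, b; 0, 0] = !![0, b; 0, 0] * W') : W' 1 0 = 0 := by
  simpa [Matrix.mul_apply, Fin.sum_univ_two, hb] using (congrFun (congrFun h 0) 0).symm

lemma Matrix.apply_zero_one_eq_zero_of_mul_lower_eq {c : R} (hc : c ≠ 0)
    (h : W * !![0, 0; c, 0] = !![0, 0; c, 0] * W') : W 0 1 = 0 := by
  simpa [Matrix.mul_apply, Fin.sum_univ_two, hc] using congrFun (congrFun h 0) 0

lemma Matrix.apply_one_one_eq_of_mul_lower_eq {c : R} (hc : c ≠ 0)
    (h : W * !![0, 0; c, 0] = !![0, 0; c, 0] * W') : W 1 1 = W' 0 0 := by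
  have h10 : W 1 1 * c = c * W' 0 0 := by
    simpa [Matrix.mul_apply, Fin.sum_univ_two] using congrFun (congrFun h 1) 0
  exact mul_left_cancel₀ hc (by rw [← h10, mul_comm])

end TwoByTwo

lemma Emat_eq_upper (m : ℕ) (a : Fin m → ℂˣ) (S : Finset (Fin m)) (i : Fin m) :
    ∃ b ≠ 0, Emat m a S i = !![0, b; 0, 0] := by
  unfold Emat
  split_ifs
  · exact ⟨_, mul_ne_zero (C_ne_zero.2 (a i).ne_zero) (X_ne_zero i), rfl⟩
  · exact ⟨_, C_ne_zero.2 (a i).ne_zero, rfl⟩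

lemma Fmat_eq_lower (m : ℕ) (a : Fin m → ℂˣ) (S : Finset (Fin m)) (i : Fin m) :
    ∃ c ≠ 0, Fmat m a S i = !![0, 0; c, 0] := by
  unfold Fmat
  split_ifs
  · exact ⟨_, C_ne_zero.2 (a i)⁻¹.ne_zero, rfl⟩
  · exact ⟨_, mul_ne_zero (C_ne_zero.2 (a i)⁻¹.ne_zero) (X_ne_zero i), rfl⟩

lemma eval_shiftAut {ι : Type*} (c x : ι → ℂ) (p : MvPolynomial ι ℂ) :
    eval x (shiftAut c p) = eval (x + c) p := by
  rw [shiftAut, AlgEquiv.ofAlgHom_apply, aeval_eq_bind₁]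
  exact (eval₂Hom_bind₁ _ _ _ _).trans (by simp; rfl)

lemma eval_shiftAut_symm {ι : Type*} (c x : ι → ℂ) (p : MvPolynomial ι ℂ) :
    eval x ((shiftAut c).symm p) = eval (x - c) p := by
  rw [shiftAut, AlgEquiv.ofAlgHom_symm, AlgEquiv.ofAlgHom_apply, aeval_eq_bind₁]
  exact (eval₂Hom_bind₁ _ _ _ _).trans (by simp; rfl)

lemma eval_Deli {m : ℕ} (i : Fin m) (x : Fin m → ℂ) (p : MvPolynomial (Fin m) ℂ) :
    eval x (Deli m i p) = eval (x - 1 + Pi.single i 1) p := by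
  rw [Deli, AlgEquiv.trans_apply, sig, eval_shiftAut_symm, Del, eval_shiftAut]
  refine congrArg (eval · p) (funext fun k => ?_)
  by_cases hk : k = i <;> simp [hk, sub_eq_add_neg]

lemma Deli_sum_X {m : ℕ} (i : Fin m) :
    Deli m i (∑ k, X k) = ∑ k, X k - C ((m : ℂ) - 1) :=
  MvPolynomial.funext fun x => by
    simp [eval_Deli, Finset.sum_add_distrib, Finset.sum_sub_distrib]
    ring

lemma single_sub_single_mem_periods_of_Deli_eq {m : ℕ} {P : MvPolynomial (Fin m) ℂ} {i j : Fin m}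
    (h : Deli m i P = Deli m j P) : Pi.single i 1 - Pi.single j 1 ∈ P.periods := by
  intro y
  have := congrArg (eval (y + 1 - Pi.single j 1)) h
  have hi : y + 1 - Pi.single j 1 - 1 + Pi.single i 1 = y + (Pi.single i 1 - Pi.single j 1) := by
    abel
  have hj : y + 1 - Pi.single j 1 - 1 + Pi.single j 1 = y := by abel
  rwa [eval_Deli, eval_Deli, hi, hj] at this

/-- Every endomorphism-defining matrix `W` intertwining the normal-form matrices is diagonal of
the form `[[F(h₁+⋯+h_m+m−1), 0],[0, F(h₁+⋯+h_m)]]` for a one-variable polynomial `F`. -/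
theorem stmt_13 (m : ℕ) (hm : 2 ≤ m) (a : Fin m → ℂˣ) (S : Finset (Fin m))
    (W : Matrix (Fin 2) (Fin 2) (MvPolynomial (Fin m) ℂ))
    (hE : ∀ i, W * Emat m a S i = Emat m a S i * W.map ⇑(Deli m i).symm)
    (hF : ∀ i, W * Fmat m a S i = Fmat m a S i * W.map ⇑(Deli m i)) :
    ∃ F : Polynomial ℂ,
      W = !![Polynomial.aeval ((∑ i, X i) + C ((m : ℂ) - 1)) F, 0;
             0, Polynomial.aeval (∑ i, (X i : MvPolynomial (Fin m) ℂ)) F] := by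
  let i₀ : Fin m := ⟨0, by omega⟩
  have h10 : W 1 0 = 0 := by
    obtain ⟨b, hb, hEb⟩ := Emat_eq_upper m a S i₀
    have h := hE i₀
    rw [hEb] at h
    simpa using Matrix.apply_one_zero_eq_zero_of_mul_upper_eq hb h
  have hF' : ∀ i, ∃ c ≠ 0, W * !![0, 0; c, 0] = !![0, 0; c, 0] * W.map (Deli m i) := fun i => by
    obtain ⟨c, hc, hFc⟩ := Fmat_eq_lower m a S i
    exact ⟨c, hc, hFc ▸ hF i⟩
  have h01 : W 0 1 = 0 := by
    obtain ⟨c, hc, h⟩ := hF' i₀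
    exact Matrix.apply_zero_one_eq_zero_of_mul_lower_eq hc h
  have h11 : ∀ i, W 1 1 = Deli m i (W 0 0) := fun i => by
    obtain ⟨c, hc, h⟩ := hF' i
    exact Matrix.apply_one_one_eq_of_mul_lower_eq hc h
  have : Nonempty (Fin m) := ⟨i₀⟩
  obtain ⟨G, hG⟩ := (W 0 0).exists_eq_aeval_sum_X fun i j =>
    single_sub_single_mem_periods_of_Deli_eq ((h11 i).symm.trans (h11 j))
  refine ⟨G.comp (Polynomial.X - Polynomial.C ((m : ℂ) - 1)), ?_⟩
  rw [Matrix.eta_fin_two W, h01, h10, h11 i₀, hG, ← Polynomial.aeval_algHom_apply, Deli_sum_X]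
  simp [Polynomial.aeval_comp]
end

section
/- Let a ∈ (ℂˣ)^m and S ⊆ {1,…,m}. If W ∈ Mat₂(ℂ[h]) satisfies W·E_i^{(a,S)} = E_i^{(a,S)}·Δ_i⁻¹(W) and W·F_i^{(a,S)} = F_i^{(a,S)}·Δ_i(W) for all i ∈ {1,…,m}, and moreover W·W = W, then W = 0 or W = I₂. -/
open MvPolynomial


lemma key {R : Type*} [CommRing R] [IsDomain R] (φ : R ≃+* R)
    (e f : R) (he : e ≠ 0) (hf : f ≠ 0)
    (W : Matrix (Fin 2) (Fin 2) R)
    (hE : W * !![0, e; 0, 0] = !![0, e; 0, 0] * W.map ⇑φ.symm)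
    (hF : W * !![0, 0; f, 0] = !![0, 0; f, 0] * W.map ⇑φ)
    (hW : W * W = W) : W = 0 ∨ W = 1 := by
  have h10 : W 1 0 = 0 := by
    have h := congrFun (congrFun hE 1) 1
    simp [Matrix.mul_apply, Fin.sum_univ_two, Matrix.map_apply] at h
    exact h.resolve_right he
  have h01 : W 0 1 = 0 := by
    have h := congrFun (congrFun hF 0) 0
    simp [Matrix.mul_apply, Fin.sum_univ_two, Matrix.map_apply] at h
    exact h.resolve_right hf
  have h00 : W 0 0 = φ.symm (W 1 1) := by
    have h := congrFun (congrFun hE 0) 1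
    simp [Matrix.mul_apply, Fin.sum_univ_two, Matrix.map_apply] at h
    rw [mul_comm] at h
    exact mul_left_cancel₀ he h
  have hidem : W 0 0 * W 0 0 = W 0 0 := by
    have h := congrFun (congrFun hW 0) 0
    simpa [Matrix.mul_apply, Fin.sum_univ_two, h01] using h
  have h2 : W 0 0 = 0 ∨ W 0 0 = 1 := by
    have : W 0 0 * (W 0 0 - 1) = 0 := by ring_nf; linear_combination hidem
    rcases mul_eq_zero.1 this with h | h
    · exact Or.inl h
    · exact Or.inr (by linear_combination h)
  rcases h2 with h | h
  · left
    have h11 : W 1 1 = 0 := by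
      have : φ.symm (W 1 1) = 0 := h ▸ h00.symm
      simpa using φ.symm.injective (by simpa using this)
    ext r c
    fin_cases r <;> fin_cases c <;> simp [h, h01, h10, h11]
  · right
    have h11 : W 1 1 = 1 := by
      have : φ.symm (W 1 1) = 1 := h ▸ h00.symm
      have := φ.symm.injective (by simpa using this)
      simpa using this
    ext r c
    fin_cases r <;> fin_cases c <;> simp [h, h01, h10, h11, Matrix.one_apply]


/-- An idempotent matrix intertwining the normal-form matrices is `0` or `I₂`
(indecomposability of `M(a,S)`). -/
theorem stmt_14 (m : ℕ) (hm : 2 ≤ m) (a : Fin m → ℂˣ) (S : Finset (Fin m))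
    (W : Matrix (Fin 2) (Fin 2) (MvPolynomial (Fin m) ℂ))
    (hE : ∀ i, W * Emat m a S i = Emat m a S i * W.map ⇑(Deli m i).symm)
    (hF : ∀ i, W * Fmat m a S i = Fmat m a S i * W.map ⇑(Deli m i))
    (hW : W * W = W) :
    W = 0 ∨ W = 1 := by
  have i : Fin m := ⟨0, by omega⟩
  have hC : (C ((a i : ℂ)) : MvPolynomial (Fin m) ℂ) ≠ 0 := by
    simp [MvPolynomial.C_eq_zero]
  have hC' : (C (((a i)⁻¹ : ℂˣ) : ℂ) : MvPolynomial (Fin m) ℂ) ≠ 0 := by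
    simp [MvPolynomial.C_eq_zero]
  by_cases hiS : i ∈ S
  · exact key (Deli m i).toRingEquiv _ _ (mul_ne_zero hC (X_ne_zero i)) hC'
      W (by simpa [Emat, hiS] using hE i) (by simpa [Fmat, hiS] using hF i) hW
  · exact key (Deli m i).toRingEquiv _ _ hC (mul_ne_zero hC' (X_ne_zero i))
      W (by simpa [Emat, hiS] using hE i) (by simpa [Fmat, hiS] using hF i) hW
end

section
/- Let a ∈ (ℂˣ)^m, S ⊆ {1,…,m}, and set s := h₁+⋯+h_m ∈ ℂ[h]. For F ∈ ℂ[T] define M_F := {(F(s+m−1)·p, F(s)·q) : p, q ∈ ℂ[h]} ⊆ ℂ[h]², where F(p) denotes evaluation of F at p ∈ ℂ[h]. Then: (i) for every F ∈ ℂ[T] and every v ∈ M_F and i ∈ {1,…,m}, one has E_i^{(a,S)}·Δ_i⁻¹(v) ∈ M_F and F_i^{(a,S)}·Δ_i(v) ∈ M_F (where Δ_i⁻¹ and Δ_i are applied entrywise to the column vector v); (ii) if F ∈ ℂ[T] is nonzero and G ∈ ℂ[T] is nonconstant, then M_{F·G} is strictly contained in M_F. Consequently, ℂ[h]² admits an infinite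 strictly decreasing chain of ℂ[h]-submodules each closed under all the maps v ↦ E_i^{(a,S)}·Δ_i⁻¹(v) and v ↦ F_i^{(a,S)}·Δ_i(v). -/
/-!
The two coordinates of `M_F` are the principal ideals generated by `F(t)` and `F(s)`, where
`t = s + m - 1`, and `Δ_i` maps `t` to `s`. Since `E_i` only moves the second coordinate into the
first (after applying `Δ_i⁻¹`) and `F_i` only the first into the second (after applying `Δ_i`),
divisibility by `F(s)` resp. `F(t)` is carried along. For strictness, `(F(t), 0) ∈ M_F` would lie in
`M_{FG}` only if `G(t)` were a unit; but `t` is algebraically independent over `ℂ`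
(some algebra map to `ℂ[T]` sends it to `T`), so `G(t)` is a unit only if `G` is constant.
-/

open MvPolynomial

/-- The subset `M_F = {(F(s+m−1)·p, F(s)·q) : p, q ∈ ℂ[h]}` of `ℂ[h]²`, where `s = h₁+⋯+h_m`. -/
noncomputable def Mset (m : ℕ) (F : Polynomial ℂ) : Set (Fin 2 → MvPolynomial (Fin m) ℂ) :=
  {v | ∃ p q : MvPolynomial (Fin m) ℂ,
    v = ![Polynomial.aeval ((∑ i, X i) + C ((m : ℂ) - 1)) F * p,
          Polynomial.aeval (∑ i, (X i : MvPolynomial (Fin m) ℂ)) F * q]}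

open Matrix

namespace Polynomial

variable {R A : Type*} [CommSemiring R] [CommSemiring A] [Algebra R A]

theorem aeval_leftInverse_of_map_eq_X {t : A} (φ : A →ₐ[R] R[X]) (ht : φ t = X) :
    Function.LeftInverse φ (aeval t) := fun p => by
  rw [← aeval_algHom_apply, ht, aeval_X_left_apply]

theorem isUnit_of_isUnit_aeval_of_map_eq_X {t : A} (φ : A →ₐ[R] R[X]) (ht : φ t = X)
    {p : R[X]} (hp : IsUnit (aeval t p)) : IsUnit p :=
  aeval_leftInverse_of_map_eq_X φ ht p ▸ hp.map φ

end Polynomial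

section SumX

variable {σ R : Type*} [Fintype σ] [CommRing R]

theorem exists_algHom_sum_X_add_C_eq_X [Nonempty σ] (c : R) :
    ∃ φ : MvPolynomial σ R →ₐ[R] Polynomial R, φ (∑ j, X j + C c) = Polynomial.X := by
  classical
  obtain ⟨j₀⟩ := ‹Nonempty σ›
  refine ⟨aeval (Pi.single j₀ (Polynomial.X - Polynomial.C c)), ?_⟩
  simp [Finset.sum_pi_single', Polynomial.algebraMap_eq]

theorem shiftAut_sum_X (c : σ → ℂ) :
    shiftAut c (∑ j, X j) = ∑ j, X j + C (∑ j, c j) := by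
  simp [shiftAut, Finset.sum_add_distrib]

theorem shiftAut_symm_sum_X (c : σ → ℂ) :
    (shiftAut c).symm (∑ j, X j) = ∑ j, X j - C (∑ j, c j) := by
  simp [shiftAut, Finset.sum_sub_distrib]

end SumX

theorem Deli_symm_sum_X (m : ℕ) (i : Fin m) :
    (Deli m i).symm (∑ j, X j) = ∑ j, X j + C ((m : ℂ) - 1) := by
  simp only [Deli, Del, sig, AlgEquiv.symm_trans_apply, AlgEquiv.symm_symm, shiftAut_sum_X,
    map_add, shiftAut_symm_sum_X, ← algebraMap_eq, AlgEquiv.commutes]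
  simp only [algebraMap_eq, Finset.sum_ite_eq', Finset.mem_univ, if_true, Finset.sum_const,
    Finset.card_univ, Fintype.card_fin, nsmul_eq_mul, mul_neg, mul_one, C_neg, C_sub, C_1]
  ring

theorem Deli_sum_X_add_C (m : ℕ) (i : Fin m) :
    Deli m i (∑ j, X j + C ((m : ℂ) - 1)) = ∑ j, X j := by
  rw [← Deli_symm_sum_X, AlgEquiv.apply_symm_apply]

theorem mem_Mset_iff {m : ℕ} {F : Polynomial ℂ} {v : Fin 2 → MvPolynomial (Fin m) ℂ} :
    v ∈ Mset m F ↔ Polynomial.aeval (∑ j, X j + C ((m : ℂ) - 1)) F ∣ v 0 ∧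
      Polynomial.aeval (∑ j, X j) F ∣ v 1 := by
  constructor
  · rintro ⟨p, q, rfl⟩
    simp
  · rintro ⟨⟨p, hp⟩, ⟨q, hq⟩⟩
    exact ⟨p, q, by ext j; fin_cases j <;> simp [hp, hq]⟩

section Invariance

variable {m : ℕ} {F : Polynomial ℂ} {v : Fin 2 → MvPolynomial (Fin m) ℂ}

theorem upper_mulVec_Deli_symm_mem_Mset (hv : v ∈ Mset m F) (i : Fin m)
    (e : MvPolynomial (Fin m) ℂ) : !![0, e; 0, 0] *ᵥ (⇑(Deli m i).symm ∘ v) ∈ Mset m F := by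
  have h1 := map_dvd (Deli m i).symm (mem_Mset_iff.mp hv).2
  rw [← Polynomial.aeval_algHom_apply, Deli_symm_sum_X] at h1
  exact mem_Mset_iff.mpr ⟨by simpa [vecHead, vecTail] using h1.mul_left e, by simp⟩

theorem lower_mulVec_Deli_mem_Mset (hv : v ∈ Mset m F) (i : Fin m)
    (f : MvPolynomial (Fin m) ℂ) : !![0, 0; f, 0] *ᵥ (⇑(Deli m i) ∘ v) ∈ Mset m F := by
  have h0 := map_dvd (Deli m i) (mem_Mset_iff.mp hv).1
  rw [← Polynomial.aeval_algHom_apply, Deli_sum_X_add_C] at h0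
  exact mem_Mset_iff.mpr ⟨by simp, by simpa [vecHead] using h0.mul_left f⟩

theorem Emat_mulVec_Deli_symm_mem_Mset (a : Fin m → ℂˣ) (S : Finset (Fin m))
    (hv : v ∈ Mset m F) (i : Fin m) : Emat m a S i *ᵥ (⇑(Deli m i).symm ∘ v) ∈ Mset m F := by
  unfold Emat
  split_ifs <;> exact upper_mulVec_Deli_symm_mem_Mset hv i _

theorem Fmat_mulVec_Deli_mem_Mset (a : Fin m → ℂˣ) (S : Finset (Fin m))
    (hv : v ∈ Mset m F) (i : Fin m) : Fmat m a S i *ᵥ (⇑(Deli m i) ∘ v) ∈ Mset m F := by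
  unfold Fmat
  split_ifs <;> exact lower_mulVec_Deli_mem_Mset hv i _

end Invariance

theorem Mset_mul_ssubset {m : ℕ} (hm : m ≠ 0) {F G : Polynomial ℂ} (hF : F ≠ 0)
    (hG : 0 < G.natDegree) : Mset m (F * G) ⊂ Mset m F := by
  have : Nonempty (Fin m) := Fin.pos_iff_nonempty.mp (Nat.pos_of_ne_zero hm)
  set t : MvPolynomial (Fin m) ℂ := ∑ j, X j + C ((m : ℂ) - 1)
  obtain ⟨φ, hφ⟩ := exists_algHom_sum_X_add_C_eq_X (σ := Fin m) ((m : ℂ) - 1)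
  refine ⟨fun v hv => ?_, fun hle => ?_⟩
  · obtain ⟨h0, h1⟩ := mem_Mset_iff.mp hv
    rw [map_mul] at h0 h1
    exact mem_Mset_iff.mpr ⟨dvd_of_mul_right_dvd h0, dvd_of_mul_right_dvd h1⟩
  · have hFt : Polynomial.aeval t F ≠ 0 :=
      (map_ne_zero_iff _ (Polynomial.aeval_leftInverse_of_map_eq_X φ hφ).injective).mpr hF
    have hw : ![Polynomial.aeval t F, 0] ∈ Mset m F := mem_Mset_iff.mpr ⟨by simp [t], by simp⟩
    have hdvd : Polynomial.aeval t F * Polynomial.aeval t G ∣ Polynomial.aeval t F * 1 := by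
      simpa [t] using (mem_Mset_iff.mp (hle hw)).1
    rw [mul_dvd_mul_iff_left hFt, ← isUnit_iff_dvd_one] at hdvd
    have := Polynomial.natDegree_eq_zero_of_isUnit
      (Polynomial.isUnit_of_isUnit_aeval_of_map_eq_X φ hφ hdvd)
    omega

noncomputable def Msubmodule (m : ℕ) (F : Polynomial ℂ) :
    Submodule (MvPolynomial (Fin m) ℂ) (Fin 2 → MvPolynomial (Fin m) ℂ) :=
  Submodule.pi Set.univ
    ![Ideal.span {Polynomial.aeval (∑ j, X j + C ((m : ℂ) - 1)) F},
      Ideal.span {Polynomial.aeval (∑ j, X j) F}]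

theorem coe_Msubmodule (m : ℕ) (F : Polynomial ℂ) : (Msubmodule m F : Set _) = Mset m F := by
  ext v
  simp [Msubmodule, Fin.forall_fin_two, Ideal.mem_span_singleton, mem_Mset_iff]

/-- The sets `M_F` are invariant under the twisted actions of the normal-form matrices, the
containment `M_{F·G} ⊂ M_F` is strict for `F ≠ 0` and `G` nonconstant, and consequently there is
an infinite strictly decreasing chain of invariant submodules of `ℂ[h]²`
(so `M(a,S)` has infinite length). -/
theorem stmt_15 (m : ℕ) (hm : 2 ≤ m) (a : Fin m → ℂˣ) (S : Finset (Fin m)) :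
    (∀ F : Polynomial ℂ, ∀ v ∈ Mset m F, ∀ i,
      (Emat m a S i).mulVec (⇑(Deli m i).symm ∘ v) ∈ Mset m F ∧
      (Fmat m a S i).mulVec (⇑(Deli m i) ∘ v) ∈ Mset m F) ∧
    (∀ F G : Polynomial ℂ, F ≠ 0 → 0 < G.natDegree → Mset m (F * G) ⊂ Mset m F) ∧
    (∃ N : ℕ → Submodule (MvPolynomial (Fin m) ℂ) (Fin 2 → MvPolynomial (Fin m) ℂ),
      (∀ k, N (k + 1) < N k) ∧
      (∀ k i, ∀ v ∈ N k,
        (Emat m a S i).mulVec (⇑(Deli m i).symm ∘ v) ∈ N k ∧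
        (Fmat m a S i).mulVec (⇑(Deli m i) ∘ v) ∈ N k)) := by
  refine ⟨fun F v hv i => ⟨Emat_mulVec_Deli_symm_mem_Mset a S hv i,
      Fmat_mulVec_Deli_mem_Mset a S hv i⟩,
    fun F G => Mset_mul_ssubset (by omega), fun k => Msubmodule m (Polynomial.X ^ k),
    fun k => ?_, fun k i v hv => ?_⟩
  · rw [← SetLike.coe_ssubset_coe, coe_Msubmodule, coe_Msubmodule, pow_succ]
    exact Mset_mul_ssubset (by omega) (pow_ne_zero k Polynomial.X_ne_zero) (by simp)
  · dsimp only at hv ⊢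
    simp only [← SetLike.mem_coe, coe_Msubmodule] at hv ⊢
    exact ⟨Emat_mulVec_Deli_symm_mem_Mset a S hv i, Fmat_mulVec_Deli_mem_Mset a S hv i⟩
end

section
/- Let a, b ∈ (ℂˣ)^m and S₁, S₂ ⊆ {1,…,m}. If W ∈ Mat₂(ℂ[h]) satisfies W·E_i^{(a,S₁)} = E_i^{(b,S₂)}·Δ_i⁻¹(W) and W·F_i^{(a,S₁)} = F_i^{(b,S₂)}·Δ_i(W) for all i ∈ {1,…,m}, then W is diagonal, i.e., its (1,2) and (2,1) entries are zero. -/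
open MvPolynomial

/-- Every matrix intertwining two families of normal-form matrices is diagonal:
homomorphisms between the `𝔰𝔩(m|1)`-modules `M(a,S₁)` and `M(b,S₂)` are purely even. -/
theorem stmt_16 (m : ℕ) (hm : 2 ≤ m) (a b : Fin m → ℂˣ) (S₁ S₂ : Finset (Fin m))
    (W : Matrix (Fin 2) (Fin 2) (MvPolynomial (Fin m) ℂ))
    (hE : ∀ i, W * Emat m a S₁ i = Emat m b S₂ i * W.map ⇑(Deli m i).symm)
    (hF : ∀ i, W * Fmat m a S₁ i = Fmat m b S₂ i * W.map ⇑(Deli m i)) :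
    W 0 1 = 0 ∧ W 1 0 = 0 := by
  have hi : (0 : ℕ) < m := by omega
  set i : Fin m := ⟨0, hi⟩
  constructor
  · have h := hF i
    have h11 : (W * Fmat m a S₁ i) 1 1 = (Fmat m b S₂ i * W.map ⇑(Deli m i)) 1 1 := by rw [h]
    have hb : (C ((((b i)⁻¹ : ℂˣ) : ℂ)) : MvPolynomial (Fin m) ℂ) ≠ 0 := by
      simp [MvPolynomial.C_eq_zero]
    have key : (Deli m i) (W 0 1) = 0 := by
      by_cases hS : i ∈ S₂ <;> by_cases hT : i ∈ S₁ <;>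
        simp [Fmat, Matrix.mul_apply, Fin.sum_univ_two, hS, hT, mul_eq_zero, hb,
          MvPolynomial.X_ne_zero] at h11 <;> simp [h11]
    exact (EmbeddingLike.map_eq_zero_iff).1 key
  · have h := hE i
    have h00 : (W * Emat m a S₁ i) 0 0 = (Emat m b S₂ i * W.map ⇑(Deli m i).symm) 0 0 := by
      rw [h]
    have hb : (C (((b i) : ℂˣ) : ℂ) : MvPolynomial (Fin m) ℂ) ≠ 0 := by
      simp [MvPolynomial.C_eq_zero]
    have key : (Deli m i).symm (W 1 0) = 0 := by
      by_cases hS : i ∈ S₂ <;> by_cases hT : i ∈ S₁ <;>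
        simp [Emat, Matrix.mul_apply, Fin.sum_univ_two, hS, hT, mul_eq_zero, hb,
          MvPolynomial.X_ne_zero] at h00 <;> simp [h00]
    exact (EmbeddingLike.map_eq_zero_iff).1 key
end

section
/- For each i ∈ {1,…,m}, let p_i, q_i, r_i, s_i ∈ ℂ[h] and set E_i := [[0, p_i],[q_i, 0]] and F_i := [[0, r_i],[s_i, 0]]. Suppose that E_i·Δ_i⁻¹(E_j) + E_j·Δ_j⁻¹(E_i) = 0 and F_i·Δ_i(F_j) + F_j·Δ_j(F_i) = 0 for all i, j ∈ {1,…,m}, and E_i·Δ_i⁻¹(F_i) + F_i·Δ_i(E_i) = h_i·I₂ for all i ∈ {1,…,m}. Then either q_i = 0 and r_i = 0 for all i ∈ {1,…,m} (all E_i strictly upper triangular and all F_i strictly lower triangular), or p_i = 0 and s_i = 0 for all i ∈ {1,…,m} (all E_i strictly lower triangular and all F_i strictly upper triangular). -/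
open MvPolynomial

/-- If antidiagonal matrices `E_i = [[0,p_i],[q_i,0]]`, `F_i = [[0,r_i],[s_i,0]]` satisfy the
`𝔰𝔩(m|1)` relations, then either all `E_i` are strictly upper triangular and all `F_i` strictly
lower triangular, or vice versa. -/
theorem stmt_17 (m : ℕ) (hm : 2 ≤ m)
    (p q r s : Fin m → MvPolynomial (Fin m) ℂ)
    (E F : Fin m → Matrix (Fin 2) (Fin 2) (MvPolynomial (Fin m) ℂ))
    (hEdef : ∀ i, E i = !![0, p i; q i, 0])
    (hFdef : ∀ i, F i = !![0, r i; s i, 0])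
    (h1 : ∀ i j, E i * (E j).map ⇑(Deli m i).symm + E j * (E i).map ⇑(Deli m j).symm = 0)
    (h2 : ∀ i j, F i * (F j).map ⇑(Deli m i) + F j * (F i).map ⇑(Deli m j) = 0)
    (h3 : ∀ i, E i * (F i).map ⇑(Deli m i).symm + F i * (E i).map ⇑(Deli m i) =
      (X i : MvPolynomial (Fin m) ℂ) • (1 : Matrix (Fin 2) (Fin 2) (MvPolynomial (Fin m) ℂ))) :
    (∀ i, q i = 0 ∧ r i = 0) ∨ (∀ i, p i = 0 ∧ s i = 0) := by
  -- Extract scalar equations from the matrix relations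
  have eqA : ∀ i j, p i * (Deli m i).symm (q j) + p j * (Deli m j).symm (q i) = 0 := by
    intro i j
    have hA := congrFun (congrFun (h1 i j) 0) 0
    simpa [hEdef, Matrix.mul_apply, Fin.sum_univ_two, Matrix.map_apply, Matrix.vecMul,
      dotProduct] using hA
  have eqD : ∀ i j, r i * (Deli m i) (s j) + r j * (Deli m j) (s i) = 0 := by
    intro i j
    have hD := congrFun (congrFun (h2 i j) 0) 0
    simpa [hFdef, Matrix.mul_apply, Fin.sum_univ_two, Matrix.map_apply, Matrix.vecMul,
      dotProduct] using hD
  have eqB : ∀ i, q i * (Deli m i).symm (r i) + s i * (Deli m i) (p i) = X i := by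
    intro i
    have hB := congrFun (congrFun (h3 i) 1) 1
    simpa [hEdef, hFdef, Matrix.mul_apply, Fin.sum_univ_two, Matrix.map_apply, Matrix.vecMul,
      dotProduct, Matrix.one_apply] using hB
  have eqC : ∀ i, p i * (Deli m i).symm (s i) + r i * (Deli m i) (q i) = X i := by
    intro i
    have hC := congrFun (congrFun (h3 i) 0) 0
    simpa [hEdef, hFdef, Matrix.mul_apply, Fin.sum_univ_two, Matrix.map_apply, Matrix.vecMul,
      dotProduct, Matrix.one_apply] using hC
  -- p i * q i = 0 and r i * s i = 0
  have hpq : ∀ i, p i = 0 ∨ q i = 0 := by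
    intro i
    have h := eqA i i
    rw [← two_mul] at h
    rcases mul_eq_zero.mp h with h | h
    · exact absurd h two_ne_zero
    · rcases mul_eq_zero.mp h with h | h
      · exact Or.inl h
      · exact Or.inr (by simpa using (Deli m i).symm.injective (h.trans (map_zero _).symm))
  have hrs : ∀ i, r i = 0 ∨ s i = 0 := by
    intro i
    have h := eqD i i
    rw [← two_mul] at h
    rcases mul_eq_zero.mp h with h | h
    · exact absurd h two_ne_zero
    · rcases mul_eq_zero.mp h with h | h
      · exact Or.inl h
      · exact Or.inr (by simpa using (Deli m i).injective (h.trans (map_zero _).symm))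
  -- each index is "upper" (q i = 0 ∧ r i = 0) or "lower" (p i = 0 ∧ s i = 0)
  have hUL : ∀ i, (q i = 0 ∧ r i = 0) ∨ (p i = 0 ∧ s i = 0) := by
    intro i
    rcases hpq i with hp | hq
    · -- p i = 0 : eqC gives r i * Deli (q i) = X i, so r i ≠ 0, hence s i = 0
      right
      refine ⟨hp, ?_⟩
      have hC := eqC i
      rw [hp, zero_mul, zero_add] at hC
      have hr : r i ≠ 0 := by
        intro h0
        rw [h0, zero_mul] at hC
        exact X_ne_zero i hC.symm
      rcases hrs i with h | h
      · exact absurd h hr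
      · exact h
    · -- q i = 0 : eqB gives s i * Deli (p i) = X i, so s i ≠ 0, hence r i = 0
      left
      refine ⟨hq, ?_⟩
      have hB := eqB i
      rw [hq, zero_mul, zero_add] at hB
      have hs : s i ≠ 0 := by
        intro h0
        rw [h0, zero_mul] at hB
        exact X_ne_zero i hB.symm
      rcases hrs i with h | h
      · exact h
      · exact absurd h hs
  -- in the upper case, p i ≠ 0; in the lower case, q i ≠ 0
  have hpne : ∀ i, q i = 0 → r i = 0 → p i ≠ 0 := by
    intro i hq hr h0
    have hC := eqC i
    rw [h0, hq, hr] at hC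
    simp only [zero_mul, mul_zero, map_zero, add_zero, zero_add] at hC
    exact X_ne_zero i hC.symm
  have hqne : ∀ i, p i = 0 → s i = 0 → q i ≠ 0 := by
    intro i hp hs h0
    have hB := eqB i
    rw [h0, hp, hs] at hB
    simp only [zero_mul, mul_zero, map_zero, add_zero, zero_add] at hB
    exact X_ne_zero i hB.symm
  -- mixing is impossible
  have hmix : ∀ i j, q i = 0 ∧ r i = 0 → p j = 0 ∧ s j = 0 → False := by
    intro i j hi hj
    have hA := eqA i j
    rw [hj.1, zero_mul, add_zero] at hA
    rcases mul_eq_zero.mp hA with h | h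
    · exact hpne i hi.1 hi.2 h
    · have : q j = 0 := by
        simpa using (Deli m i).symm.injective (h.trans (map_zero _).symm)
      exact hqne j hj.1 hj.2 this
  have hm0 : 0 < m := lt_of_lt_of_le two_pos hm
  rcases hUL ⟨0, hm0⟩ with h0 | h0
  · left
    intro j
    rcases hUL j with h | h
    · exact h
    · exact absurd (hmix _ _ h0 h) not_false
  · right
    intro j
    rcases hUL j with h | h
    · exact absurd (hmix _ _ h h0) not_false
    · exact h
end

section
/- Let μ := Δ_m⁻¹∘Δ̄, where Δ_m := σ_m⁻¹∘Δ (so μ(h_j) = h_j + 1 for j ≠ m, μ(h_m) = h_m, and μ(k_j) = k_j − 1 for all j). Suppose P, Q ∈ Mat₂(P) satisfy P·μ(P) = 0, Q·μ⁻¹(Q) = 0 and P·μ(Q) + Q·μ⁻¹(P) = h_m·I₂. Then there exist an invertible matrix W ∈ Mat₂(P) and c ∈ ℂˣ such that either W⁻¹·P·μ(W) = [[0, c·h_m],[0,0]] and W⁻¹·Q·μ⁻¹(W) = [[0,0],[c⁻¹,0]], or W⁻¹·P·μ(W) = [[0, c],[0,0]] and W⁻¹·Q·μ⁻¹(W) =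 [[0,0],[c⁻¹·h_m,0]]. -/
open MvPolynomial

/-- The polynomial ring `P = ℂ[h₁,…,h_{m+2}, k₁,…,k_{n+1}]`: the `h` variables are indexed by
`Sum.inl`, the `k` variables by `Sum.inr`.  (Here the actual parameters of the paper are
`m + 2 ≥ 2` and `n + 2 ≥ 2`, with `(n + 2) - 1 = n + 1` variables `k`.) -/
abbrev Pring (m n : ℕ) := MvPolynomial (Fin (m + 2) ⊕ Fin (n + 1)) ℂ

/-- `Δ = σ₁∘⋯∘σ_m`: each `h_i ↦ h_i - 1`, the `k_j` fixed. -/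
noncomputable def DelP (m n : ℕ) : Pring m n ≃ₐ[ℂ] Pring m n :=
  shiftAut (Sum.elim (fun _ => (-1 : ℂ)) (fun _ => (0 : ℂ)))

/-- `Δ̄ = τ₁∘⋯∘τ_{n−1}`: each `k_j ↦ k_j - 1`, the `h_i` fixed. -/
noncomputable def DelBarP (m n : ℕ) : Pring m n ≃ₐ[ℂ] Pring m n :=
  shiftAut (Sum.elim (fun _ => (0 : ℂ)) (fun _ => (-1 : ℂ)))

/-- `σ_m`: `h_m ↦ h_m - 1`, all other variables fixed (here `h_m` is the last `h`-variable). -/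
noncomputable def sigLast (m n : ℕ) : Pring m n ≃ₐ[ℂ] Pring m n :=
  shiftAut (fun x => if x = Sum.inl (Fin.last (m + 1)) then (-1 : ℂ) else 0)

/-- `Δ_m := σ_m⁻¹ ∘ Δ`. -/
noncomputable def DelmP (m n : ℕ) : Pring m n ≃ₐ[ℂ] Pring m n :=
  (DelP m n).trans (sigLast m n).symm

/-- `μ := Δ_m⁻¹ ∘ Δ̄`, so `μ(h_j) = h_j + 1` for `j ≠ m`, `μ(h_m) = h_m`,
and `μ(k_j) = k_j - 1` for all `j`. -/
noncomputable def muP (m n : ℕ) : Pring m n ≃ₐ[ℂ] Pring m n :=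
  (DelBarP m n).trans (DelmP m n).symm

/-!
Since `det P · μ(det P) = 0`, `P` has rank at most one, so over the UFD `P` it factors as
`P = x yᵀ` with `x` primitive; likewise `Q = z wᵀ`. The relations `P μ(P) = 0` and
`Q μ⁻¹(Q) = 0` say `y ⬝ μ(x) = 0` and `w ⬝ μ⁻¹(z) = 0`. With `W = [x z]`, the third relation
reads `W M = h_m I`, where `M` has rows `α μ(w)` and `β μ⁻¹(y)`, `α = y ⬝ μ(z)`,
`β = w ⬝ μ⁻¹(x)`; hence also `M W = h_m I`, which gives `μ(w) ⬝ z = 0`, `μ⁻¹(y) ⬝ x = 0`,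
`α μ(β) = h_m` and `β (μ⁻¹(y) ⬝ z) = h_m`. Primitivity of `z` and `x` makes `det W` divide
`μ(β)` and `μ⁻¹(y) ⬝ z`; as `α` and `β` are not both units, irreducibility of `h_m` forces
`det W` to be a unit. In the basis `W` the pair becomes
`([[0, α], [0, 0]], [[0, 0], [β, 0]])`, and as the units of `P` are the nonzero constants,
one of `α`, `μ(β)` is a constant and the other is a constant multiple of `h_m`.
-/

open Matrix

namespace Matrix

theorem map_vecMulVec {α β F : Type*} [Mul α] [Mul β] [FunLike F α β] [MulHomClass F α β]
    {m n : Type*} (f : F) (x : m → α) (y : n → α) :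
    (vecMulVec x y).map f = vecMulVec (f ∘ x) (f ∘ y) := by
  ext i j
  simp [vecMulVec_apply]

variable {R : Type*} [CommRing R]

theorem transpose_of_mul_of (x z p q : Fin 2 → R) :
    (of ![x, z])ᵀ * of ![p, q] = vecMulVec x p + vecMulVec z q := by
  ext i j
  simp [mul_apply, Fin.sum_univ_two, vecMulVec_apply]

theorem vecMul_map_transpose_of (f : R → R) (v x z : Fin 2 → R) :
    v ᵥ* ((of ![x, z])ᵀ.map f) = ![v ⬝ᵥ f ∘ x, v ⬝ᵥ f ∘ z] := by
  ext i
  fin_cases i <;> simp [vecMul, dotProduct]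

theorem det_of_fin_two (x z : Fin 2 → R) : (of ![x, z]).det = x 0 * z 1 - x 1 * z 0 := by
  rw [det_fin_two]
  rfl

theorem inv_transpose_of_mul_vecMulVec_add {x z : Fin 2 → R} (hW : IsUnit (of ![x, z]).det)
    (p q : Fin 2 → R) : ((of ![x, z])ᵀ)⁻¹ * (vecMulVec x p + vecMulVec z q) = of ![p, q] := by
  rw [← transpose_of_mul_of, nonsing_inv_mul_cancel_left _ _ (by rwa [det_transpose])]

variable [IsDomain R]

theorem det_eq_zero_of_mul_map_eq_zero {n : Type*} [Fintype n] [DecidableEq n] [Nonempty n]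
    (e : R ≃+* R) {A : Matrix n n R} (h : A * A.map e = 0) : A.det = 0 := by
  have := congrArg det h
  rw [det_mul, ← RingEquiv.mapMatrix_apply, ← RingEquiv.map_det, det_zero] at this
  exact (mul_eq_zero.mp this).elim id EmbeddingLike.map_eq_zero_iff.mp

theorem dotProduct_map_eq_zero_of_vecMulVec_mul_map_eq_zero {n : Type*} [Fintype n]
    (e : R ≃+* R) {x y : n → R} (hx : x ≠ 0) (hy : y ≠ 0)
    (h : vecMulVec x y * (vecMulVec x y).map e = 0) : y ⬝ᵥ e ∘ x = 0 := by
  have hey : e ∘ y ≠ 0 := by rwa [Ne, Function.comp_eq_zero_iff y e.injective (map_zero e)]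
  rw [map_vecMulVec, vecMulVec_mul_vecMulVec, vecMulVec_eq_zero, smul_eq_zero] at h
  tauto

theorem mul_eq_smul_one_comm {n : Type*} [Fintype n] [DecidableEq n] {A B : Matrix n n R}
    {c : R} (hc : c ≠ 0) (h : A * B = c • 1) : B * A = c • 1 := by
  have hdet : A.det ≠ 0 := fun h0 => by
    have := congrArg det h
    rw [det_mul, h0, zero_mul, det_smul, det_one, mul_one] at this
    exact pow_ne_zero _ hc this.symm
  refine smul_right_injective _ hdet ?_
  calc A.det • (B * A) = A.adjugate * (A * B) * A := by
        rw [← Matrix.mul_assoc, adjugate_mul, smul_mul, Matrix.one_mul, smul_mul]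
    _ = A.det • (c • 1) := by
        rw [h, Matrix.mul_smul, Matrix.mul_one, smul_mul, adjugate_mul, smul_comm]

theorem dotProduct_eq_of_smul_vecMulVec_add_smul_vecMulVec {a b c : R} {x z u v : Fin 2 → R}
    (hc : c ≠ 0) (h : a • vecMulVec x u + b • vecMulVec z v = c • 1) :
    a * (u ⬝ᵥ x) = c ∧ u ⬝ᵥ z = 0 ∧ v ⬝ᵥ x = 0 ∧ b * (v ⬝ᵥ z) = c := by
  have hWM : (of ![x, z])ᵀ * of ![a • u, b • v] = c • 1 := by
    rw [transpose_of_mul_of, vecMulVec_smul, vecMulVec_smul, h]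
  have hMW := mul_eq_smul_one_comm hc hWM
  have h₀₀ : a * (u ⬝ᵥ x) = c := by
    simpa [mul_apply, dotProduct, mul_add, mul_assoc] using congrFun₂ hMW 0 0
  have h₀₁ : a * (u ⬝ᵥ z) = 0 := by
    simpa [mul_apply, dotProduct, mul_add, mul_assoc] using congrFun₂ hMW 0 1
  have h₁₀ : b * (v ⬝ᵥ x) = 0 := by
    simpa [mul_apply, dotProduct, mul_add, mul_assoc] using congrFun₂ hMW 1 0
  have h₁₁ : b * (v ⬝ᵥ z) = c := by
    simpa [mul_apply, dotProduct, mul_add, mul_assoc] using congrFun₂ hMW 1 1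
  exact ⟨h₀₀, (mul_eq_zero.mp h₀₁).resolve_left (left_ne_zero_of_mul (h₀₀ ▸ hc)),
    (mul_eq_zero.mp h₁₀).resolve_left (left_ne_zero_of_mul (h₁₁ ▸ hc)), h₁₁⟩

end Matrix

section UFD

variable {R : Type*} [CommRing R] [UniqueFactorizationMonoid R]

theorem exists_eq_mul_isRelPrime (a b : R) :
    ∃ g x₀ x₁ : R, a = g * x₀ ∧ b = g * x₁ ∧ IsRelPrime x₀ x₁ := by
  let := UniqueFactorizationMonoid.toGCDMonoid R
  obtain ⟨x₀, x₁, h₀, h₁, hx⟩ := extract_gcd a b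
  exact ⟨_, x₀, x₁, h₀, h₁, gcd_isUnit_iff_isRelPrime.mp hx⟩

variable [IsDomain R]

theorem IsRelPrime.exists_eq_of_mul_add_mul_eq_zero {a b u v : R} (hab : IsRelPrime a b)
    (h : a * u + b * v = 0) : ∃ s, u = s * b ∧ v = -(s * a) := by
  rcases eq_or_ne b 0 with rfl | hb
  · obtain ⟨a, rfl⟩ := isRelPrime_zero_right.mp hab
    refine ⟨-(v * ↑a⁻¹), by simpa using h, ?_⟩
    simp [mul_assoc]
  · obtain ⟨s, rfl⟩ := hab.symm.dvd_of_dvd_mul_left (⟨-v, by linear_combination h⟩ : b ∣ a * u)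
    exact ⟨s, mul_comm b s, mul_left_cancel₀ hb (by linear_combination h)⟩

namespace Matrix

theorem exists_eq_vecMulVec_of_det_eq_zero {A : Matrix (Fin 2) (Fin 2) R} (hA : A.det = 0) :
    ∃ x y : Fin 2 → R, IsRelPrime (x 0) (x 1) ∧ A = vecMulVec x y := by
  rw [det_fin_two] at hA
  obtain ⟨g, x₀, x₁, h₀, h₁, hx⟩ := exists_eq_mul_isRelPrime (A 0 0) (A 1 0)
  rcases eq_or_ne g 0 with rfl | hg
  · obtain ⟨g', y₀, y₁, h₀', h₁', hy⟩ := exists_eq_mul_isRelPrime (A 0 1) (A 1 1)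
    refine ⟨![y₀, y₁], ![0, g'], hy, ?_⟩
    rw [eta_fin_two A, h₀, h₁, h₀', h₁']
    ext i j
    fin_cases i <;> fin_cases j <;> simp [vecMulVec_apply, mul_comm]
  · have hker : x₀ * A 1 1 + x₁ * -A 0 1 = 0 :=
      mul_left_cancel₀ hg (by rw [h₀, h₁] at hA; linear_combination hA)
    obtain ⟨t, ht₀, ht₁⟩ := hx.exists_eq_of_mul_add_mul_eq_zero hker
    refine ⟨![x₀, x₁], ![g, t], hx, ?_⟩
    rw [eta_fin_two A, h₀, h₁, neg_inj.mp ht₁, ht₀]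
    ext i j
    fin_cases i <;> fin_cases j <;> simp [vecMulVec_apply, mul_comm]

theorem det_of_dvd_dotProduct {x z u : Fin 2 → R} (hz : IsRelPrime (z 0) (z 1))
    (h : u ⬝ᵥ z = 0) : (of ![x, z]).det ∣ u ⬝ᵥ x := by
  simp only [dotProduct, Fin.sum_univ_two] at h ⊢
  obtain ⟨s, hs₀, hs₁⟩ :=
    hz.exists_eq_of_mul_add_mul_eq_zero (u := u 0) (v := u 1) (by linear_combination h)
  exact ⟨s, by rw [det_of_fin_two, hs₀, hs₁]; ring⟩

theorem isUnit_det_of_mul_dotProduct_eq_irreducible {x z u v : Fin 2 → R} {a b h : R}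
    (hh : Irreducible h) (hx : IsRelPrime (x 0) (x 1)) (hz : IsRelPrime (z 0) (z 1))
    (huz : u ⬝ᵥ z = 0) (hvx : v ⬝ᵥ x = 0) (hux : a * (u ⬝ᵥ x) = h) (hvz : b * (v ⬝ᵥ z) = h)
    (hab : ¬(IsUnit a ∧ IsUnit b)) : IsUnit (of ![x, z]).det := by
  obtain ⟨k, hk⟩ := det_of_dvd_dotProduct (x := x) hz huz
  obtain ⟨l, hl⟩ : (of ![x, z]).det ∣ v ⬝ᵥ z := by
    have := det_of_dvd_dotProduct (x := z) hx hvx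
    rwa [show (of ![z, x]).det = -(of ![x, z]).det by rw [det_of_fin_two, det_of_fin_two]; ring, neg_dvd] at this
  by_contra hD
  have hak : h = a * k * (of ![x, z]).det := by rw [← hux, hk]; ring
  have hbl : h = b * l * (of ![x, z]).det := by rw [← hvz, hl]; ring
  exact hab ⟨isUnit_of_mul_isUnit_left ((hh.isUnit_or_isUnit hak).resolve_right hD),
    isUnit_of_mul_isUnit_left ((hh.isUnit_or_isUnit hbl).resolve_right hD)⟩

theorem exists_twisted_conj_of_mul_map_eq_zero (e : R ≃+* R) {h : R} (hh : Irreducible h)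
    {P Q : Matrix (Fin 2) (Fin 2) R} (hP : P * P.map e = 0) (hQ : Q * Q.map e.symm = 0)
    (hPQ : P * Q.map e + Q * P.map e.symm = h • 1) :
    ∃ W : Matrix (Fin 2) (Fin 2) R, IsUnit W ∧ ∃ α β : R, α * e β = h ∧
      W⁻¹ * P * W.map e = !![0, α; 0, 0] ∧ W⁻¹ * Q * W.map e.symm = !![0, 0; β, 0] := by
  obtain ⟨x, y, hx, rfl⟩ := exists_eq_vecMulVec_of_det_eq_zero (det_eq_zero_of_mul_map_eq_zero e hP)
  obtain ⟨z, w, hz, rfl⟩ :=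
    exists_eq_vecMulVec_of_det_eq_zero (det_eq_zero_of_mul_map_eq_zero e.symm hQ)
  set α := y ⬝ᵥ e ∘ z
  set β := w ⬝ᵥ e.symm ∘ x
  simp only [map_vecMulVec, vecMulVec_mul_vecMulVec, vecMulVec_smul] at hPQ
  obtain ⟨hux, huz, hvx, hvz⟩ := dotProduct_eq_of_smul_vecMulVec_add_smul_vecMulVec hh.ne_zero hPQ
  have heβ : (e ∘ w) ⬝ᵥ x = e β := by simp [β]
  have hαβ : α * e β = h := heβ ▸ hux
  have hyx : y ⬝ᵥ e ∘ x = 0 := by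
    refine dotProduct_map_eq_zero_of_vecMulVec_mul_map_eq_zero e ?_ ?_ hP
    · rintro rfl; exact not_isRelPrime_zero_zero hx
    · rintro rfl; simp [hh.ne_zero.symm] at hux
  have hwz : w ⬝ᵥ e.symm ∘ z = 0 := by
    refine dotProduct_map_eq_zero_of_vecMulVec_mul_map_eq_zero e.symm ?_ ?_ hQ
    · rintro rfl; exact not_isRelPrime_zero_zero hz
    · rintro rfl; simp [hh.ne_zero.symm] at hvz
  have hD : IsUnit (of ![x, z]).det :=
    isUnit_det_of_mul_dotProduct_eq_irreducible hh hx hz huz hvx hux hvz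
      fun ⟨hα, hβ⟩ => hh.not_isUnit (hαβ ▸ hα.mul (heβ ▸ hβ.map e))
  have hzero : (![0, 0] : Fin 2 → R) = 0 := by simp
  refine ⟨(of ![x, z])ᵀ, (isUnit_iff_isUnit_det _).2 (by rwa [det_transpose]), α, β, hαβ, ?_, ?_⟩
  · calc _ = ((of ![x, z])ᵀ)⁻¹ * (vecMulVec x ![0, α] + vecMulVec z ![0, 0]) := by
          rw [Matrix.mul_assoc, vecMulVec_mul, vecMul_map_transpose_of, hyx, hzero,
            vecMulVec_zero, add_zero]
      _ = _ := inv_transpose_of_mul_vecMulVec_add hD _ _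
  · calc _ = ((of ![x, z])ᵀ)⁻¹ * (vecMulVec x ![0, 0] + vecMulVec z ![β, 0]) := by
          rw [Matrix.mul_assoc, vecMulVec_mul, vecMul_map_transpose_of, hwz, hzero,
            vecMulVec_zero, zero_add]
      _ = _ := inv_transpose_of_mul_vecMulVec_add hD _ _

end Matrix

end UFD

theorem MvPolynomial.exists_unit_of_mul_map_eq_X {σ K : Type*} [CommRing K] [IsDomain K]
    {e : MvPolynomial σ K ≃ₐ[K] MvPolynomial σ K} {i : σ} (he : e (X i) = X i)
    {α β : MvPolynomial σ K} (h : α * e β = X i) :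
    ∃ c : Kˣ, (α = C (c : K) * X i ∧ β = C ((c⁻¹ : Kˣ) : K)) ∨
      (α = C (c : K) ∧ β = C ((c⁻¹ : Kˣ) : K) * X i) := by
  have hC (r : K) : e (C r) = C r := by simpa using e.commutes r
  rcases X_prime.irreducible.isUnit_or_isUnit h.symm with hα | hβ
  · obtain ⟨r, hr, rfl⟩ := isUnit_iff_eq_C_of_isReduced.mp hα
    refine ⟨hr.unit, Or.inr ⟨rfl, e.injective ?_⟩⟩
    rw [map_mul, hC, he, ← h, ← mul_assoc, ← C_mul, hr.val_inv_mul, C_1, one_mul]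
  · obtain ⟨r, hr, rfl⟩ := isUnit_iff_eq_C_of_isReduced.mp ((isUnit_map_iff e β).mp hβ)
    refine ⟨hr.unit⁻¹, Or.inl ⟨?_, by simp⟩⟩
    rw [← h, hC, mul_left_comm, ← C_mul, hr.val_inv_mul, C_1, mul_one]

theorem muP_X_last (m n : ℕ) :
    muP m n (X (Sum.inl (Fin.last (m + 1)))) = X (Sum.inl (Fin.last (m + 1))) := by
  simp [muP, DelmP, DelBarP, DelP, sigLast, shiftAut, AlgEquiv.ofAlgHom]

/-- If `P, Q ∈ Mat₂(P)` satisfy `P·μ(P) = 0`, `Q·μ⁻¹(Q) = 0` and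
`P·μ(Q) + Q·μ⁻¹(P) = h_m·I₂`, then `(P,Q)` is twisted-conjugate to
`([[0, c·h_m],[0,0]], [[0,0],[c⁻¹,0]])` or `([[0,c],[0,0]], [[0,0],[c⁻¹·h_m,0]])`, `c ∈ ℂˣ`. -/
theorem stmt_18 (m n : ℕ)
    (P Q : Matrix (Fin 2) (Fin 2) (Pring m n))
    (hP : P * P.map ⇑(muP m n) = 0)
    (hQ : Q * Q.map ⇑(muP m n).symm = 0)
    (hPQ : P * Q.map ⇑(muP m n) + Q * P.map ⇑(muP m n).symm =
      (X (Sum.inl (Fin.last (m + 1))) : Pring m n) •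
        (1 : Matrix (Fin 2) (Fin 2) (Pring m n))) :
    ∃ W : Matrix (Fin 2) (Fin 2) (Pring m n), IsUnit W ∧
      ∃ c : ℂˣ,
        ((W⁻¹ * P * W.map ⇑(muP m n) =
            !![0, C (c : ℂ) * X (Sum.inl (Fin.last (m + 1))); 0, 0] ∧
          W⁻¹ * Q * W.map ⇑(muP m n).symm = !![0, 0; C ((c⁻¹ : ℂˣ) : ℂ), 0]) ∨
         (W⁻¹ * P * W.map ⇑(muP m n) = !![0, C (c : ℂ); 0, 0] ∧
          W⁻¹ * Q * W.map ⇑(muP m n).symm =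
            !![0, 0; C ((c⁻¹ : ℂˣ) : ℂ) * X (Sum.inl (Fin.last (m + 1))), 0])) := by
  obtain ⟨W, hW, α, β, hαβ, hPW, hQW⟩ :=
    exists_twisted_conj_of_mul_map_eq_zero (muP m n).toRingEquiv X_prime.irreducible hP hQ hPQ
  obtain ⟨c, ⟨rfl, rfl⟩ | ⟨rfl, rfl⟩⟩ := exists_unit_of_mul_map_eq_X (muP_X_last m n) hαβ
  · exact ⟨W, hW, c, Or.inl ⟨hPW, hQW⟩⟩
  · exact ⟨W, hW, c, Or.inr ⟨hPW, hQW⟩⟩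
end
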